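/- Let G = (L, Σ, δ, O) be a POMDP, T ⊆ L, and l ∈ L. If there exists an observation-based strategy that is almost-sure winning for Safe(T) from l, then there exists a pure observation-based finite-memory strategy with memory of size at most 2^{|L|} that is almost-sure winning for Safe(T) from l. -/

import Mathlib

open scoped ENNReal

/-- A partially-observable Markov decision process (POMDP) with states `L`,
actions `A` and observations `O`: a probabilistic transition function and an
observation function (the observations partition the state space). -/
structure POMDP (L : Type) (A : Type) (O : Type) where
  δ : L → A → PMF L
  obs : L → O

namespace POMDP

variable {L A O : Type}

/-- A (randomized) strategy: given the initial state and the history of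
(action, state) steps played so far, it chooses a distribution on actions. -/
abbrev Strategy (L A : Type) := L → List (A × L) → PMF A

/-- The sequence of states visited along a finite prefix. -/
def statesOf (l : L) (h : List (A × L)) : List L := l :: h.map Prod.snd

/-- Auxiliary probability of a finite prefix, for a strategy `π` given as a
function of the remaining history. -/
noncomputable def prefProbAux (M : POMDP L A O) :
    (List (A × L) → PMF A) → L → List (A × L) → ℝ≥0∞
  | _, _, [] => 1
  | π, l, (a, l') :: h =>
      π [] a * M.δ l a l' * M.prefProbAux (fun h' => π ((a, l') :: h')) l' h

/-- The probability, under strategy `α` from state `l`, that the play starts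
with the finite prefix `h` of (action, state) steps. -/
noncomputable def prefProb (M : POMDP L A O) (α : Strategy L A) (l : L)
    (h : List (A × L)) : ℝ≥0∞ :=
  M.prefProbAux (α l) l h

/-- A prefix is consistent with `α` from `l` if it has positive probability. -/
def Consistent (M : POMDP L A O) (α : Strategy L A) (l : L) (h : List (A × L)) : Prop :=
  0 < M.prefProb α l h

/-- The probability, under strategy `α` from state `l`, that the length-`n`
prefix of the play satisfies the predicate `P`. -/
noncomputable def horizonProb (M : POMDP L A O) [Fintype L] [Fintype A]
    (α : Strategy L A) (l : L) (n : ℕ) (P : List (A × L) → Prop) : ℝ≥0∞ :=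
  ∑ f : Fin n → A × L,
    Set.indicator {g : Fin n → A × L | P (List.ofFn g)}
      (fun g => M.prefProb α l (List.ofFn g)) f

/-- `Pr_l^α(Reach(T))`: probability that the play visits a state of `T`
(as the increasing limit of the finite-horizon reachability probabilities). -/
noncomputable def reachProb (M : POMDP L A O) [Fintype L] [Fintype A]
    (α : Strategy L A) (l : L) (T : Set L) : ℝ≥0∞ :=
  ⨆ n, M.horizonProb α l n (fun h => ∃ s ∈ statesOf l h, s ∈ T)

/-- `Pr_l^α(Safe(T))`: probability that all states of the play lie in `T`
(as the decreasing limit of the finite-horizon safety probabilities). -/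
noncomputable def safeProb (M : POMDP L A O) [Fintype L] [Fintype A]
    (α : Strategy L A) (l : L) (T : Set L) : ℝ≥0∞ :=
  ⨅ n, M.horizonProb α l n (fun h => ∀ s ∈ statesOf l h, s ∈ T)

/-- `Pr_l^α(Until(T₁,T₂))`: probability that the play visits `T₂` at some
position `k` with all positions `≤ k` in `T₁`. -/
noncomputable def untilProb (M : POMDP L A O) [Fintype L] [Fintype A]
    (α : Strategy L A) (l : L) (T₁ T₂ : Set L) : ℝ≥0∞ :=
  ⨆ n, M.horizonProb α l n (fun h => ∃ k, ∃ hk : k < (statesOf l h).length,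
      (statesOf l h).get ⟨k, hk⟩ ∈ T₂ ∧
      ∀ j, ∀ hj : j < (statesOf l h).length, j ≤ k → (statesOf l h).get ⟨j, hj⟩ ∈ T₁)

/-- `Pr_l^α(coBüchi(T))`: probability that from some point on all states of
the play lie in `T`. -/
noncomputable def coBuchiProb (M : POMDP L A O) [Fintype L] [Fintype A]
    (α : Strategy L A) (l : L) (T : Set L) : ℝ≥0∞ :=
  ⨆ k, ⨅ n, M.horizonProb α l n (fun h =>
    ∀ j, ∀ hj : j < (statesOf l h).length, k ≤ j → (statesOf l h).get ⟨j, hj⟩ ∈ T)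

/-- `Pr_l^α(Büchi(T))`: probability that the play visits `T` infinitely often. -/
noncomputable def buchiProb (M : POMDP L A O) [Fintype L] [Fintype A]
    (α : Strategy L A) (l : L) (T : Set L) : ℝ≥0∞ :=
  ⨅ k, ⨆ n, M.horizonProb α l n (fun h =>
    ∃ j, ∃ hj : j < (statesOf l h).length, k ≤ j ∧ (statesOf l h).get ⟨j, hj⟩ ∈ T)

/-- A strategy is observation-based if it plays the same distribution after any
two prefixes with the same sequences of observations and of actions. -/
def ObservationBased (M : POMDP L A O) (α : Strategy L A) : Prop :=
  ∀ l l' (h h' : List (A × L)), M.obs l = M.obs l' →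
    h.map Prod.fst = h'.map Prod.fst →
    h.map (fun p => M.obs p.2) = h'.map (fun p => M.obs p.2) →
    α l h = α l' h'

/-- A strategy is pure if it always plays a Dirac distribution. -/
def PureStrategy (α : Strategy L A) : Prop := ∀ l h, ∃ a, α l h = PMF.pure a

/-- Edge of the underlying graph of the POMDP. -/
def Edge (M : POMDP L A O) (l l' : L) : Prop := ∃ a, 0 < M.δ l a l'

/-- Reachability in the underlying graph of the POMDP. -/
def ReachableFrom (M : POMDP L A O) (l l' : L) : Prop :=
  Relation.ReflTransGen M.Edge l l'

/-- The memory state reached by a memory-update function `u` (together with the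
current state) after running through a prefix. -/
def memRun (M : POMDP L A O) {Mem : Type} (u : Mem → O → A → Mem) :
    Mem → L → List (A × L) → Mem × L
  | m, l, [] => (m, l)
  | m, l, (a, l') :: h => M.memRun u (u m (M.obs l) a) l' h

/-- The (observation-based) strategy induced by a finite-memory machine given by
memory-update function `u`, next-action function `next` and initial memory `m0`. -/
def fmStrategy (M : POMDP L A O) {Mem : Type} (u : Mem → O → A → Mem)
    (next : Mem → O → PMF A) (m0 : Mem) : Strategy L A :=
  fun l h =>
    let p := M.memRun u m0 l h
    next p.1 (M.obs p.2)

/-- The distribution choosing `x` and `y` with probability 1/2 each. -/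
noncomputable def half (x y : L) : PMF L :=
  (PMF.uniformOfFintype Bool).map (fun b => if b then x else y)

end POMDP

/-!
A strategy `α` that is almost-sure safe is in fact surely safe: a finite prefix of positive
probability leaving `T` would already cost safety probability. Hence every belief of `α` (the set
of states compatible with an observed signature) lies in `T`. The belief strategy plays, at a
belief `B`, some action that `α` plays after a signature with belief `B`; since `α` is
observation-based, the subset-construction successor of `B` under that action is again a belief
of `α`, so by induction the belief strategy only meets beliefs of `α`, each containing the true
state. The memory is the successor set of the previous belief, a subset of `L`.
-/

lemma PMF.sum_coe {α : Type*} [Fintype α] (p : PMF α) : ∑ a, p a = 1 :=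
  (tsum_fintype (fun a => p a)).symm.trans p.tsum_coe

namespace POMDP

variable {L A O : Type} (M : POMDP L A O)

def lastState : L → List (A × L) → L
  | l, [] => l
  | _, (_, l') :: h => lastState l' h

@[simp]
lemma lastState_append_singleton (l : L) (h : List (A × L)) (a : A) (y : L) :
    lastState l (h ++ [(a, y)]) = y := by
  induction h generalizing l with
  | nil => rfl
  | cons p t ih => exact ih p.2

lemma lastState_mem_statesOf (l : L) (h : List (A × L)) : lastState l h ∈ statesOf l h := by
  induction h generalizing l with
  | nil => simp [statesOf, lastState]
  | cons p t ih =>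
    simp only [statesOf, List.map_cons, List.mem_cons] at ih ⊢
    exact Or.inr (ih p.2)

lemma statesOf_append_singleton (l : L) (h : List (A × L)) (a : A) (y : L) :
    statesOf l (h ++ [(a, y)]) = statesOf l h ++ [y] := by
  simp [statesOf]

lemma prefProbAux_append (h₁ h₂ : List (A × L)) (π : List (A × L) → PMF A) (l : L) :
    M.prefProbAux π l (h₁ ++ h₂) =
      M.prefProbAux π l h₁ * M.prefProbAux (fun h => π (h₁ ++ h)) (lastState l h₁) h₂ := by
  induction h₁ generalizing π l with
  | nil => simp [prefProbAux, lastState]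
  | cons p t ih =>
    simp only [List.cons_append, prefProbAux, ih, lastState, mul_assoc]

lemma prefProb_snoc (α : Strategy L A) (l : L) (h : List (A × L)) (a : A) (y : L) :
    M.prefProb α l (h ++ [(a, y)]) = M.prefProb α l h * (α l h a * M.δ (lastState l h) a y) := by
  simp [prefProb, prefProbAux_append, prefProbAux]

lemma consistent_nil (α : Strategy L A) (l : L) : M.Consistent α l [] := by
  simp [Consistent, prefProb, prefProbAux]

lemma consistent_snoc_iff (α : Strategy L A) (l : L) (h : List (A × L)) (a : A) (y : L) :
    M.Consistent α l (h ++ [(a, y)]) ↔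
      M.Consistent α l h ∧ 0 < α l h a ∧ 0 < M.δ (lastState l h) a y := by
  simp only [Consistent, prefProb_snoc, pos_iff_ne_zero, ne_eq, mul_eq_zero, not_or]

def SurelySafe (α : Strategy L A) (l : L) (T : Set L) : Prop :=
  ∀ h, M.Consistent α l h → ∀ x ∈ statesOf l h, x ∈ T

lemma surelySafe_of_forall_lastState_mem {α : Strategy L A} {l : L} {T : Set L}
    (hT : ∀ h, M.Consistent α l h → lastState l h ∈ T) : M.SurelySafe α l T := by
  intro h hc
  induction h using List.reverseRecOn with
  | nil => simpa [statesOf, lastState] using hT [] hc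
  | append_singleton t p ih =>
    obtain ⟨a, y⟩ := p
    rw [statesOf_append_singleton]
    intro x hx
    rcases List.mem_append.1 hx with hx | hx
    · exact ih ((M.consistent_snoc_iff α l t a y).1 hc).1 x hx
    · simpa [List.mem_singleton.1 hx] using hT _ hc

section Probability

variable [Fintype L] [Fintype A]

lemma sum_prefProbAux (n : ℕ) (π : List (A × L) → PMF A) (l : L) :
    ∑ f : Fin n → A × L, M.prefProbAux π l (List.ofFn f) = 1 := by
  induction n generalizing π l with
  | zero => simp [prefProbAux]
  | succ n ih =>
    rw [← (Fin.consEquiv fun _ => A × L).sum_comp, Fintype.sum_prod_type]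
    simp only [Fin.consEquiv, Equiv.coe_fn_mk, List.ofFn_succ, Fin.cons_zero, Fin.cons_succ,
      prefProbAux, ← Finset.mul_sum, ih, mul_one, Fintype.sum_prod_type, PMF.sum_coe]

lemma horizonProb_eq_one_iff (α : Strategy L A) (l : L) (n : ℕ) (P : List (A × L) → Prop) :
    M.horizonProb α l n P = 1 ↔
      ∀ f : Fin n → A × L, M.Consistent α l (List.ofFn f) → P (List.ofFn f) := by
  set S := {g : Fin n → A × L | P (List.ofFn g)}
  set F := fun g : Fin n → A × L => M.prefProb α l (List.ofFn g)
  have htotal : M.horizonProb α l n P + ∑ f, Sᶜ.indicator F f = 1 := by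
    rw [horizonProb, ← Finset.sum_add_distrib]
    exact (Finset.sum_congr rfl fun f _ => Set.indicator_self_add_compl_apply S F f).trans
      (M.sum_prefProbAux n (α l) l)
  have hcompl : M.horizonProb α l n P = 1 ↔ ∑ f, Sᶜ.indicator F f = 0 :=
    ⟨fun h1 => by simpa [h1] using htotal, fun h0 => by simpa [h0] using htotal⟩
  rw [hcompl, Finset.sum_eq_zero_iff]
  simp [Consistent, S, F, pos_iff_ne_zero, not_imp_comm]

lemma safeProb_eq_one_iff (α : Strategy L A) (l : L) (T : Set L) :
    M.safeProb α l T = 1 ↔ M.SurelySafe α l T := by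
  have hle : ∀ n, M.horizonProb α l n (fun h => ∀ s ∈ statesOf l h, s ∈ T) ≤ 1 := fun n =>
    (Finset.sum_le_sum fun f _ => Set.indicator_le_self _ _ f).trans_eq
      (M.sum_prefProbAux n (α l) l)
  have hinf : M.safeProb α l T = 1 ↔
      ∀ n, M.horizonProb α l n (fun h => ∀ s ∈ statesOf l h, s ∈ T) = 1 :=
    ⟨fun h1 n => le_antisymm (hle n) (h1 ▸ iInf_le _ n), fun h1 => by simp [safeProb, h1]⟩
  simp only [hinf, horizonProb_eq_one_iff]
  constructor
  · intro H h hc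
    simpa using H h.length h.get (by simpa using hc)
  · exact fun H n f hc => H _ hc

end Probability

def signature (h : List (A × L)) : List (A × O) :=
  h.map fun p => (p.1, M.obs p.2)

@[simp]
lemma signature_append_singleton (h : List (A × L)) (a : A) (y : L) :
    M.signature (h ++ [(a, y)]) = M.signature h ++ [(a, M.obs y)] := by
  simp [signature]

lemma signature_eq_signature_iff {h h' : List (A × L)} :
    M.signature h = M.signature h' ↔
      h.map Prod.fst = h'.map Prod.fst ∧
        h.map (fun p => M.obs p.2) = h'.map (fun p => M.obs p.2) := by
  induction h generalizing h' with
  | nil => cases h' <;> simp [signature]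
  | cons p t ih =>
    cases h' with
    | nil => simp [signature]
    | cons p' t' =>
      simp only [signature, List.map_cons, List.cons.injEq, Prod.mk.injEq] at ih ⊢
      rw [ih]
      tauto

lemma ObservationBased.eq_of_signature_eq {M : POMDP L A O} {α : Strategy L A}
    (hα : M.ObservationBased α) (l : L) {h h' : List (A × L)}
    (hs : M.signature h = M.signature h') : α l h = α l h' :=
  hα l l h h' rfl ((M.signature_eq_signature_iff).1 hs).1 ((M.signature_eq_signature_iff).1 hs).2

section FiniteMemory

variable {Mem : Type} (u : Mem → O → A → Mem)

lemma memRun_snd (h : List (A × L)) (m : Mem) (l : L) : (M.memRun u m l h).2 = lastState l h := by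
  induction h generalizing m l with
  | nil => rfl
  | cons p t ih => exact ih _ p.2

lemma memRun_snoc (h : List (A × L)) (m : Mem) (l : L) (a : A) (y : L) :
    M.memRun u m l (h ++ [(a, y)]) = (u (M.memRun u m l h).1 (M.obs (lastState l h)) a, y) := by
  induction h generalizing m l with
  | nil => rfl
  | cons p t ih => exact ih _ p.2

lemma memRun_congr {h h' : List (A × L)} (hs : M.signature h = M.signature h') (m : Mem)
    {l l' : L} (ho : M.obs l = M.obs l') :
    (M.memRun u m l h).1 = (M.memRun u m l' h').1 ∧
      M.obs (lastState l h) = M.obs (lastState l' h') := by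
  induction h generalizing h' m l l' with
  | nil => cases h' <;> simp_all [signature, memRun, lastState]
  | cons p t ih =>
    cases h' with
    | nil => simp [signature] at hs
    | cons p' t' =>
      simp only [signature, List.map_cons, List.cons.injEq, Prod.mk.injEq] at hs
      simp only [memRun, lastState, hs.1.1, ho]
      exact ih hs.2 _ hs.1.2

lemma fmStrategy_observationBased (next : Mem → O → PMF A) (m0 : Mem) :
    M.ObservationBased (M.fmStrategy u next m0) := by
  intro l l' h h' ho hf hs
  obtain ⟨hmem, hobs⟩ :=
    M.memRun_congr u ((M.signature_eq_signature_iff).2 ⟨hf, hs⟩) m0 ho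
  simp only [fmStrategy, memRun_snd, hmem, hobs]

end FiniteMemory

section Belief

def belief (α : Strategy L A) (l : L) (s : List (A × O)) : Set L :=
  {x | ∃ h, M.signature h = s ∧ M.Consistent α l h ∧ lastState l h = x}

def post (B : Set L) (a : A) : Set L :=
  {y | ∃ x ∈ B, 0 < M.δ x a y}

variable {α : Strategy L A} {l : L}

lemma belief_nil : M.belief α l [] = {l} := by
  ext x
  constructor
  · rintro ⟨h, hs, -, rfl⟩
    obtain rfl : h = [] := by simpa [signature] using hs
    rfl
  · rintro rfl
    exact ⟨[], rfl, M.consistent_nil α _, rfl⟩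

/-- The `⊇` direction works because `α`, being observation-based, plays `a` with positive
probability after every history with signature `M.signature h₁`. -/
lemma belief_snoc (hα : M.ObservationBased α) {h₁ : List (A × L)} {a : A}
    (ha : a ∈ (α l h₁).support) (o : O) :
    M.belief α l (M.signature h₁ ++ [(a, o)]) =
      M.post (M.belief α l (M.signature h₁)) a ∩ M.obs ⁻¹' {o} := by
  ext y
  constructor
  · rintro ⟨h, hs, hc, rfl⟩
    rcases h.eq_nil_or_concat' with rfl | ⟨h₂, ⟨b, z⟩, rfl⟩
    · simp [signature] at hs
    · obtain ⟨hs₂, rfl, rfl⟩ : M.signature h₂ = M.signature h₁ ∧ b = a ∧ M.obs z = o := by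
        simpa using hs
      obtain ⟨hc₂, -, hδ⟩ := (M.consistent_snoc_iff α l h₂ b z).1 hc
      exact ⟨⟨lastState l h₂, ⟨h₂, hs₂, hc₂, rfl⟩, by simpa using hδ⟩, by simp⟩
  · rintro ⟨⟨x, ⟨h₂, hs₂, hc₂, rfl⟩, hδ⟩, rfl⟩
    have hplay : 0 < α l h₂ a := by
      rw [hα.eq_of_signature_eq l hs₂]
      exact pos_iff_ne_zero.2 ((PMF.mem_support_iff _ _).1 ha)
    exact ⟨h₂ ++ [(a, y)], by simp [hs₂], (M.consistent_snoc_iff α l h₂ a y).2 ⟨hc₂, hplay, hδ⟩,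
      by simp⟩

lemma belief_subset {T : Set L} (hsafe : M.SurelySafe α l T) (s : List (A × O)) :
    M.belief α l s ⊆ T := by
  rintro _ ⟨h, -, hc, rfl⟩
  exact hsafe h hc _ (lastState_mem_statesOf l h)

end Belief

section BeliefStrategy

/-- The memory stores the successor set of the last belief; the belief itself is
recovered by restricting it to the current observation. -/
def beliefUpdate (B : Set L) (o : O) (a : A) : Set L :=
  M.post (B ∩ M.obs ⁻¹' {o}) a

def IsBeliefAction (α : Strategy L A) (l : L) (B : Set L) (a : A) : Prop :=
  ∃ h, M.belief α l (M.signature h) = B ∧ a ∈ (α l h).support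

variable [Nonempty A]

noncomputable def beliefAction (α : Strategy L A) (l : L) (B : Set L) : A :=
  Classical.epsilon (M.IsBeliefAction α l B)

noncomputable def beliefStrategy (α : Strategy L A) (l : L) : Strategy L A :=
  M.fmStrategy M.beliefUpdate
    (fun B o => PMF.pure (M.beliefAction α l (B ∩ M.obs ⁻¹' {o}))) {l}

lemma beliefStrategy_invariant {α : Strategy L A} (hα : M.ObservationBased α) {l : L}
    {h : List (A × L)} (hc : M.Consistent (M.beliefStrategy α l) l h) :
    lastState l h ∈ (M.memRun M.beliefUpdate {l} l h).1 ∧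
      ∃ s, M.belief α l s =
        (M.memRun M.beliefUpdate {l} l h).1 ∩ M.obs ⁻¹' {M.obs (lastState l h)} := by
  induction h using List.reverseRecOn with
  | nil => exact ⟨rfl, [], by simp [belief_nil, memRun, lastState]⟩
  | append_singleton t p ih =>
    obtain ⟨a, y⟩ := p
    obtain ⟨hct, hplay, hδ⟩ := (M.consistent_snoc_iff _ l t a y).1 hc
    obtain ⟨hlast, s, hs⟩ := ih hct
    set B := (M.memRun M.beliefUpdate {l} l t).1 ∩ M.obs ⁻¹' {M.obs (lastState l t)}
    have hβ : M.beliefStrategy α l l t = PMF.pure (M.beliefAction α l B) := by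
      simp only [beliefStrategy, fmStrategy, memRun_snd, B]
    have ha : a = M.beliefAction α l B := by
      rw [hβ] at hplay
      exact (PMF.mem_support_pure_iff _ _).1 ((PMF.mem_support_iff _ _).2 hplay.ne')
    have hex : ∃ b, M.IsBeliefAction α l B b := by
      obtain ⟨h₀, hs₀, -, -⟩ : lastState l t ∈ M.belief α l s := hs ▸ ⟨hlast, rfl⟩
      obtain ⟨b, hb⟩ := (α l h₀).support_nonempty
      exact ⟨b, h₀, hs₀ ▸ hs, hb⟩
    obtain ⟨h₁, hB₁, ha₁⟩ : M.IsBeliefAction α l B a := ha ▸ Classical.epsilon_spec hex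
    rw [memRun_snoc, lastState_append_singleton]
    refine ⟨⟨lastState l t, ⟨hlast, rfl⟩, hδ⟩, M.signature h₁ ++ [(a, M.obs y)], ?_⟩
    rw [M.belief_snoc hα ha₁, hB₁]
    rfl

lemma beliefStrategy_surelySafe {α : Strategy L A} (hα : M.ObservationBased α) {l : L}
    {T : Set L} (hsafe : M.SurelySafe α l T) : M.SurelySafe (M.beliefStrategy α l) l T := by
  refine M.surelySafe_of_forall_lastState_mem fun h hc => ?_
  obtain ⟨hlast, s, hs⟩ := M.beliefStrategy_invariant hα hc
  exact M.belief_subset hsafe s (hs ▸ ⟨hlast, rfl⟩)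

end BeliefStrategy

end POMDP

/-- If there is an observation-based strategy almost-sure winning
for `Safe(T)` from `l`, then there is a pure observation-based finite-memory
strategy, with memory of size at most `2^{|L|}`, that is almost-sure winning
for `Safe(T)` from `l`. -/
theorem almost_safe_pure_exponential_memory {L A O : Type} [Fintype L] [Fintype A]
    (M : POMDP L A O) (T : Set L) (l : L)
    (h : ∃ α : POMDP.Strategy L A, M.ObservationBased α ∧ M.safeProb α l T = 1) :
    ∃ (Mem : Type) (iM : Fintype Mem) (m0 : Mem) (u : Mem → O → A → Mem)
      (next : Mem → O → A),
      @Fintype.card Mem iM ≤ 2 ^ Fintype.card L ∧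
      POMDP.PureStrategy (M.fmStrategy u (fun m o => PMF.pure (next m o)) m0) ∧
      M.ObservationBased (M.fmStrategy u (fun m o => PMF.pure (next m o)) m0) ∧
      M.safeProb (M.fmStrategy u (fun m o => PMF.pure (next m o)) m0) l T = 1 := by
  classical
  obtain ⟨α, hα, hsafe⟩ := h
  have : Nonempty A := ⟨(α l []).support_nonempty.some⟩
  refine ⟨Set L, inferInstance, {l}, M.beliefUpdate,
    fun B o => M.beliefAction α l (B ∩ M.obs ⁻¹' {o}), Fintype.card_set.le, fun _ _ => ⟨_, rfl⟩,
    M.fmStrategy_observationBased _ _ _, ?_⟩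
  exact (M.safeProb_eq_one_iff _ l T).2
    (M.beliefStrategy_surelySafe hα ((M.safeProb_eq_one_iff α l T).1 hsafe))
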